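/- arXiv:2311.18742 — 7 statements merged into one kernel-verified Lean document; each statement's English description precedes it below -/
import Mathlib

section
/- For integers a, ℓ, k ≥ 2, consider a 2-colouring c of the set T = {ℓ, k, ℓk, a, ℓa, ka, ℓka, ℓ²a, ℓ²ka}. If c(ℓ) ≠ c(k), then there exist x, y, z ∈ T with c(x) = c(y) = c(z), x·y = z, and a divides z. -/
/-!
Call the colour of `l` red and that of `k` blue. If `a` is red, then in turn `la` is blue
(`l · a`), `lka` red (`k · la`), `l²ka` blue (`l · lka`), `l²a` red (`k · l²a`) and `lk` blue
(`lk · a`), so `lk · la = l²ka` is blue. If `a` is blue, then in turn `ka` is red (`k · a`),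
`lka` blue (`l · ka`), `lk` red (`lk · a`), `la` red (`k · la`), `l²a` blue (`l · la`) and
`l²ka` red (`k · l²a`), so `lk · la = l²ka` is red.
-/

theorem Bool.eq_of_ne_of_ne {x y z : Bool} (hxy : x ≠ y) (hzx : z ≠ x) : z = y := by
  revert x y z; decide

namespace ProductColouring

def T (a l k : ℕ) : Finset ℕ := {l, k, l*k, a, l*a, k*a, l*k*a, l^2*a, l^2*k*a}

def HasMonoProductTriple (c : ℕ → Bool) (a : ℕ) (S : Finset ℕ) : Prop :=
  ∃ x ∈ S, ∃ y ∈ S, ∃ z ∈ S, c x = c y ∧ c y = c z ∧ x * y = z ∧ a ∣ z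

variable {c : ℕ → Bool} {a l k : ℕ}

theorem HasMonoProductTriple.of_mul_eq {S : Finset ℕ} {x y m : ℕ} (hx : x ∈ S) (hy : y ∈ S)
    (hz : m * a ∈ S) (hxy : x * y = m * a) (hcx : c x = c y) (hcy : c y = c (m * a)) :
    HasMonoProductTriple c a S :=
  ⟨x, hx, y, hy, m * a, hz, hcx, hcy, hxy, dvd_mul_left a m⟩

theorem hasMonoProductTriple_T (x y m : ℕ) (hcx : c x = c y) (hcy : c y = c (m * a))
    (hx : x ∈ T a l k := by simp [T]) (hy : y ∈ T a l k := by simp [T])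
    (hz : m * a ∈ T a l k := by simp [T]) (hxy : x * y = m * a := by ring) :
    HasMonoProductTriple c a (T a l k) :=
  .of_mul_eq hx hy hz hxy hcx hcy

theorem hasMonoProductTriple_of_left (hc : c l ≠ c k) (ha : c a = c l) :
    HasMonoProductTriple c a (T a l k) := by
  by_contra h
  have hla : c (l*a) = c k := Bool.eq_of_ne_of_ne hc fun e =>
    h (hasMonoProductTriple_T l a l (by simp [*]) (by simp [*]))
  have hlka : c (l*k*a) = c l := Bool.eq_of_ne_of_ne hc.symm fun e =>
    h (hasMonoProductTriple_T k (l*a) (l*k) (by simp [*]) (by simp [*]))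
  have hl2ka : c (l^2*k*a) = c k := Bool.eq_of_ne_of_ne hc fun e =>
    h (hasMonoProductTriple_T l (l*k*a) (l^2*k) (by simp [*]) (by simp [*]))
  have hl2a : c (l^2*a) = c l := Bool.eq_of_ne_of_ne hc.symm fun e =>
    h (hasMonoProductTriple_T k (l^2*a) (l^2*k) (by simp [*]) (by simp [*]))
  have hlk : c (l*k) = c k := Bool.eq_of_ne_of_ne hc fun e =>
    h (hasMonoProductTriple_T (l*k) a (l*k) (by simp [*]) (by simp [*]))
  exact h (hasMonoProductTriple_T (l*k) (l*a) (l^2*k) (by simp [*]) (by simp [*]))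

theorem hasMonoProductTriple_of_right (hc : c l ≠ c k) (ha : c a = c k) :
    HasMonoProductTriple c a (T a l k) := by
  by_contra h
  have hka : c (k*a) = c l := Bool.eq_of_ne_of_ne hc.symm fun e =>
    h (hasMonoProductTriple_T k a k (by simp [*]) (by simp [*]))
  have hlka : c (l*k*a) = c k := Bool.eq_of_ne_of_ne hc fun e =>
    h (hasMonoProductTriple_T l (k*a) (l*k) (by simp [*]) (by simp [*]))
  have hlk : c (l*k) = c l := Bool.eq_of_ne_of_ne hc.symm fun e =>
    h (hasMonoProductTriple_T (l*k) a (l*k) (by simp [*]) (by simp [*]))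
  have hla : c (l*a) = c l := Bool.eq_of_ne_of_ne hc.symm fun e =>
    h (hasMonoProductTriple_T k (l*a) (l*k) (by simp [*]) (by simp [*]))
  have hl2a : c (l^2*a) = c k := Bool.eq_of_ne_of_ne hc fun e =>
    h (hasMonoProductTriple_T l (l*a) (l^2) (by simp [*]) (by simp [*]))
  have hl2ka : c (l^2*k*a) = c l := Bool.eq_of_ne_of_ne hc.symm fun e =>
    h (hasMonoProductTriple_T k (l^2*a) (l^2*k) (by simp [*]) (by simp [*]))
  exact h (hasMonoProductTriple_T (l*k) (l*a) (l^2*k) (by simp [*]) (by simp [*]))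

end ProductColouring

theorem stmt_0_general (a l k : ℕ)
    (c : ℕ → Bool) (hc : c l ≠ c k) :
    ∃ x ∈ ({l, k, l*k, a, l*a, k*a, l*k*a, l^2*a, l^2*k*a} : Finset ℕ),
    ∃ y ∈ ({l, k, l*k, a, l*a, k*a, l*k*a, l^2*a, l^2*k*a} : Finset ℕ),
    ∃ z ∈ ({l, k, l*k, a, l*a, k*a, l*k*a, l^2*a, l^2*k*a} : Finset ℕ),
      c x = c y ∧ c y = c z ∧ x * y = z ∧ a ∣ z := by
  by_cases ha : c a = c l
  · exact ProductColouring.hasMonoProductTriple_of_left hc ha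
  · exact ProductColouring.hasMonoProductTriple_of_right hc (Bool.eq_of_ne_of_ne hc ha)

theorem stmt_0 (a l k : ℕ) (ha : 2 ≤ a) (hl : 2 ≤ l) (hk : 2 ≤ k)
    (c : ℕ → Bool) (hc : c l ≠ c k) :
    ∃ x ∈ ({l, k, l*k, a, l*a, k*a, l*k*a, l^2*a, l^2*k*a} : Finset ℕ),
    ∃ y ∈ ({l, k, l*k, a, l*a, k*a, l*k*a, l^2*a, l^2*k*a} : Finset ℕ),
    ∃ z ∈ ({l, k, l*k, a, l*a, k*a, l*k*a, l^2*a, l^2*k*a} : Finset ℕ),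
      c x = c y ∧ c y = c z ∧ x * y = z ∧ a ∣ z :=
  stmt_0_general a l k c hc
end

section
/- Every 3-colouring of the integer interval {1,...,14} contains x, y, z of the same colour (repetitions allowed) with x + y = z. -/
def g (l : List (Fin 3)) (i : ℕ) : Fin 3 := l.getD (i-1) 0

def oklast (l : List (Fin 3)) : Bool :=
  (List.range' 1 (l.length - 1)).all fun x =>
    !(decide (g l x = g l (l.length - x)) && decide (g l (l.length - x) = g l l.length))

def search : List (Fin 3) → ℕ → Bool
  | _, 0 => false
  | l, fuel+1 =>
    ([0,1,2] : List (Fin 3)).all fun col =>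
      (!(oklast (l ++ [col]))) || search (l ++ [col]) fuel

lemma g_append (l : List (Fin 3)) (a : Fin 3) {i : ℕ} (h1 : 1 ≤ i) (h2 : i ≤ l.length) :
    g (l ++ [a]) i = g l i := by
  unfold g
  exact List.getD_append _ _ _ _ (by omega)

lemma g_append_last (l : List (Fin 3)) (a : Fin 3) :
    g (l ++ [a]) (l.length + 1) = a := by
  unfold g
  rw [Nat.add_sub_cancel, List.getD_append_right _ _ _ _ le_rfl, Nat.sub_self]
  rfl

lemma bridge : ∀ (fuel : ℕ) (l : List (Fin 3)) (f : ℕ → Fin 3),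
    l.length + fuel = 14 →
    (∀ i, 1 ≤ i → i ≤ l.length → g l i = f i) →
    search l fuel = true →
    ∃ x ∈ Finset.Icc 1 14, ∃ y ∈ Finset.Icc 1 14, ∃ z ∈ Finset.Icc 1 14,
      f x = f y ∧ f y = f z ∧ x + y = z := by
  intro fuel
  induction fuel with
  | zero => intro l f _ _ h; simp [search] at h
  | succ n ih =>
    intro l f hlen hagree hs
    set a := f (l.length + 1) with ha
    set l' := l ++ [a] with hl'
    have hmem : a ∈ ([0,1,2] : List (Fin 3)) := by
      have : ∀ v : Fin 3, v ∈ ([0,1,2] : List (Fin 3)) := by decide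
      exact this a
    rw [search, List.all_eq_true] at hs
    have hs' := hs a hmem
    have hlen' : l'.length = l.length + 1 := by simp [hl']
    have hagree' : ∀ i, 1 ≤ i → i ≤ l'.length → g l' i = f i := by
      intro i h1 h2
      rw [hlen'] at h2
      rcases Nat.lt_or_ge i (l.length + 1) with h | h
      · rw [g_append l a h1 (by omega)]; exact hagree i h1 (by omega)
      · have : i = l.length + 1 := by omega
        subst this
        exact g_append_last l a
    rcases Bool.or_eq_true_iff.mp hs' with h | h
    · -- conflict found
      have hf : oklast (l ++ [a]) = false := by
        cases hok : oklast (l ++ [a]) with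
        | false => rfl
        | true => rw [hok] at h; simp at h
      rw [oklast, List.all_eq_false] at hf
      obtain ⟨x, hx, hcon⟩ := hf
      rw [List.mem_range'_1] at hx
      obtain ⟨hx1, hx2⟩ := hx
      simp only [Bool.not_eq_true', Bool.not_eq_false, Bool.and_eq_true, decide_eq_true_eq] at hcon
      obtain ⟨e1, e2⟩ := hcon
      set N := l'.length with hN
      have hN14 : N ≤ 14 := by omega
      have hxN : x ≤ N - 1 := by omega
      have hNx1 : 1 ≤ N - x := by omega
      have hNxN : N - x ≤ N := by omega
      have hN1 : 1 ≤ N := by omega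
      refine ⟨x, ?_, N - x, ?_, N, ?_, ?_, ?_, ?_⟩
      · rw [Finset.mem_Icc]; omega
      · rw [Finset.mem_Icc]; omega
      · rw [Finset.mem_Icc]; omega
      · rw [← hagree' x hx1 (by omega), ← hagree' (N - x) hNx1 hNxN]; exact e1
      · rw [← hagree' (N - x) hNx1 hNxN, ← hagree' N hN1 le_rfl]; exact e2
      · omega
    · exact ih l' f (by omega) hagree' h

set_option maxRecDepth 1000000 in
set_option maxHeartbeats 4000000 in
lemma search_true : search [] 14 = true := by decide

theorem stmt_4 (c : ℕ → Fin 3) :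
    ∃ x ∈ Finset.Icc 1 14, ∃ y ∈ Finset.Icc 1 14, ∃ z ∈ Finset.Icc 1 14,
      c x = c y ∧ c y = c z ∧ x + y = z := by
  exact bridge 14 [] c (by simp) (by intro i h1 h2; simp at h2; omega) search_true
end

section
/- Let a₁,...,a_k be positive integers with a₁ = 1 and let A = a₁ + ... + a_k. The 2-colouring of the real interval [1, A² + A − 1) defined by R = [1, A) ∪ [A², A² + A − 1) and B = [A, A²) has no x₁,...,x_k, y all in R with a₁x₁ + ... + a_kx_k = y, and no x₁,...,x_k, y all in B with a₁x₁ + ... + a_kx_k = y. -/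
/-! Weighting by the `aᵢ` scales a blue point `x ≥ A` to at least `A · A = A²`, beyond the blue
interval, and scales red points `x ≥ 1` to at least `A`, beyond `[1, A)`. So a red solution has
`y ∈ [A², A² + A - 1)`: if every `xᵢ < A` then `y < A²`, while a single `xⱼ ≥ A²` already pushes
`y` up to `A + (A² - 1)`. -/

open Finset

variable {ι : Type*} {s : Finset ι} {w x : ι → ℝ}

theorem mul_sum_le_sum_mul_of_le (hw : ∀ i ∈ s, 0 ≤ w i) {c : ℝ} (hx : ∀ i ∈ s, c ≤ x i) :
    c * ∑ i ∈ s, w i ≤ ∑ i ∈ s, w i * x i := by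
  rw [mul_sum]
  exact sum_le_sum fun i hi => by nlinarith [hw i hi, hx i hi]

theorem sum_mul_lt_mul_sum_of_lt (hs : s.Nonempty) (hw : ∀ i ∈ s, 0 < w i) {c : ℝ}
    (hx : ∀ i ∈ s, x i < c) : ∑ i ∈ s, w i * x i < c * ∑ i ∈ s, w i := by
  rw [mul_sum]
  exact sum_lt_sum_of_nonempty hs fun i hi => by nlinarith [hw i hi, hx i hi]

theorem sum_add_sub_one_le_sum_mul (hw : ∀ i ∈ s, 1 ≤ w i) (hx : ∀ i ∈ s, 1 ≤ x i)
    {j : ι} (hj : j ∈ s) : ∑ i ∈ s, w i + (x j - 1) ≤ ∑ i ∈ s, w i * x i := by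
  have hsplit : ∑ i ∈ s, w i * x i = ∑ i ∈ s, w i + ∑ i ∈ s, w i * (x i - 1) := by
    rw [← sum_add_distrib]
    exact sum_congr rfl fun i _ => by ring
  have hterm : w j * (x j - 1) ≤ ∑ i ∈ s, w i * (x i - 1) :=
    single_le_sum (f := fun i => w i * (x i - 1))
      (fun i hi => mul_nonneg (by linarith [hw i hi]) (by linarith [hx i hi])) hj
  nlinarith [hw j hj, hx j hj]

theorem stmt_8_general (k : ℕ) (hk : 0 < k) (a : Fin k → ℕ) (ha : ∀ i, 0 < a i)
    (A : ℝ) (hA : A = ∑ i, (a i : ℝ)) :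
    (¬ ∃ (x : Fin k → ℝ) (y : ℝ),
        (∀ i, (1 ≤ x i ∧ x i < A) ∨ (A^2 ≤ x i ∧ x i < A^2 + A - 1)) ∧
        ((1 ≤ y ∧ y < A) ∨ (A^2 ≤ y ∧ y < A^2 + A - 1)) ∧
        ∑ i, (a i : ℝ) * x i = y) ∧
    (¬ ∃ (x : Fin k → ℝ) (y : ℝ),
        (∀ i, A ≤ x i ∧ x i < A^2) ∧ (A ≤ y ∧ y < A^2) ∧
        ∑ i, (a i : ℝ) * x i = y) := by
  have ha_one : ∀ i ∈ univ, (1 : ℝ) ≤ a i := fun i _ => Nat.one_le_cast.mpr (ha i)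
  have ha_nonneg : ∀ i ∈ univ, (0 : ℝ) ≤ a i := fun i hi => by linarith [ha_one i hi]
  constructor
  · rintro ⟨x, y, hx, hy, rfl⟩
    have hx_one : ∀ i ∈ univ, 1 ≤ x i := fun i _ => by
      rcases hx i with h | h <;> nlinarith
    have hy_ge : A ≤ ∑ i, (a i : ℝ) * x i := by
      simpa [hA] using mul_sum_le_sum_mul_of_le ha_nonneg hx_one
    by_cases hlarge : ∃ j, A^2 ≤ x j
    · obtain ⟨j, hj⟩ := hlarge
      have hy_large := sum_add_sub_one_le_sum_mul ha_one hx_one (mem_univ j)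
      rw [← hA] at hy_large
      rcases hy with h | h <;> linarith
    · push Not at hlarge
      have hx_lt : ∀ i ∈ univ, x i < A := fun i _ => by
        rcases hx i with h | h <;> linarith [hlarge i]
      have hy_lt := sum_mul_lt_mul_sum_of_lt (univ_nonempty_iff.mpr ⟨⟨0, hk⟩⟩)
        (fun i _ => Nat.cast_pos.mpr (ha i)) hx_lt
      rw [← hA] at hy_lt
      rcases hy with h | h <;> nlinarith
  · rintro ⟨x, y, hx, hy, rfl⟩
    have hy_ge := mul_sum_le_sum_mul_of_le ha_nonneg fun i _ => (hx i).1
    rw [← hA] at hy_ge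
    nlinarith [hy.2]

theorem stmt_8 (k : ℕ) (hk : 0 < k) (a : Fin k → ℕ) (ha : ∀ i, 0 < a i)
    (ha1 : a ⟨0, hk⟩ = 1) (A : ℝ) (hA : A = ∑ i, (a i : ℝ)) :
    (¬ ∃ (x : Fin k → ℝ) (y : ℝ),
        (∀ i, (1 ≤ x i ∧ x i < A) ∨ (A^2 ≤ x i ∧ x i < A^2 + A - 1)) ∧
        ((1 ≤ y ∧ y < A) ∨ (A^2 ≤ y ∧ y < A^2 + A - 1)) ∧
        ∑ i, (a i : ℝ) * x i = y) ∧
    (¬ ∃ (x : Fin k → ℝ) (y : ℝ),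
        (∀ i, A ≤ x i ∧ x i < A^2) ∧ (A ≤ y ∧ y < A^2) ∧
        ∑ i, (a i : ℝ) * x i = y) :=
  stmt_8_general k hk a ha A hA
end

section
/- In the 2-colouring of {2,...,N} with red class R = [2, √(N/2)] ∪ (N/2, N] and blue class B = (√(N/2), N/2], every monochromatic solution (x, y, z) to x·y = z (with 2 ≤ x, y, z ≤ N, all the same colour) satisfies x, y, z ∈ [2, √(N/2)]. -/
/-! Write `a = N / 2`. A red number above `a` times a factor `≥ 2` exceeds `2a = N`, so both red
factors are at most `√a`, their product is at most `a`, and it can only be red if it is at most `√a`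
as well. Two blue factors exceed `√a`, so their product exceeds `a` and cannot be blue. -/

namespace Real

variable {a x y : ℝ}

theorem le_sqrt_of_mul_le_two_mul (ha : 0 ≤ a) (hx : x ≤ √a ∨ a < x) (hy : 2 ≤ y)
    (hxy : x * y ≤ 2 * a) : x ≤ √a := by
  refine hx.resolve_right fun hax => ?_
  nlinarith

theorem mul_le_of_le_sqrt (ha : 0 ≤ a) (hy : 0 ≤ y) (hx : x ≤ √a) (hy' : y ≤ √a) :
    x * y ≤ a :=
  calc x * y ≤ √a * √a := mul_le_mul hx hy' hy (sqrt_nonneg a)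
    _ = a := mul_self_sqrt ha

theorem lt_mul_of_sqrt_lt (ha : 0 ≤ a) (hx : √a < x) (hy : √a < y) : a < x * y :=
  calc a = √a * √a := (mul_self_sqrt ha).symm
    _ < x * y := mul_lt_mul'' hx hy (sqrt_nonneg a) (sqrt_nonneg a)

end Real

theorem stmt_12_general (N : ℕ) (x y z : ℕ)
    (hx : 2 ≤ x ∧ x ≤ N) (hy : 2 ≤ y ∧ y ≤ N) (hz : 2 ≤ z ∧ z ≤ N)
    (heq : x * y = z)
    (hmono :
      (((x : ℝ) ≤ Real.sqrt (N / 2) ∨ (N : ℝ) / 2 < x) ∧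
       ((y : ℝ) ≤ Real.sqrt (N / 2) ∨ (N : ℝ) / 2 < y) ∧
       ((z : ℝ) ≤ Real.sqrt (N / 2) ∨ (N : ℝ) / 2 < z)) ∨
      ((Real.sqrt (N / 2) < (x : ℝ) ∧ (x : ℝ) ≤ (N : ℝ) / 2) ∧
       (Real.sqrt (N / 2) < (y : ℝ) ∧ (y : ℝ) ≤ (N : ℝ) / 2) ∧
       (Real.sqrt (N / 2) < (z : ℝ) ∧ (z : ℝ) ≤ (N : ℝ) / 2))) :
    (x : ℝ) ≤ Real.sqrt (N / 2) ∧ (y : ℝ) ≤ Real.sqrt (N / 2) ∧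
    (z : ℝ) ≤ Real.sqrt (N / 2) := by
  have ha : (0 : ℝ) ≤ N / 2 := by positivity
  have hzxy : (z : ℝ) = x * y := by exact_mod_cast heq.symm
  have hx2 : (2 : ℝ) ≤ x := by exact_mod_cast hx.1
  have hy2 : (2 : ℝ) ≤ y := by exact_mod_cast hy.1
  have hzN : (x : ℝ) * y ≤ 2 * (N / 2) := by
    rw [← hzxy, mul_div_cancel₀ _ two_ne_zero]
    exact_mod_cast hz.2
  rcases hmono with ⟨hxr, hyr, hzr⟩ | ⟨⟨hxb, -⟩, ⟨hyb, -⟩, -, hzb⟩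
  · have hxs := Real.le_sqrt_of_mul_le_two_mul ha hxr hy2 hzN
    have hys := Real.le_sqrt_of_mul_le_two_mul ha hyr hx2 (mul_comm (x : ℝ) y ▸ hzN)
    have hzs : (z : ℝ) ≤ N / 2 := hzxy ▸ Real.mul_le_of_le_sqrt ha (by linarith) hxs hys
    exact ⟨hxs, hys, hzr.resolve_right hzs.not_gt⟩
  · exact absurd (hzxy ▸ hzb) (Real.lt_mul_of_sqrt_lt ha hxb hyb).not_ge

theorem stmt_12 (N : ℕ) (hN : 8 ≤ N) (x y z : ℕ)
    (hx : 2 ≤ x ∧ x ≤ N) (hy : 2 ≤ y ∧ y ≤ N) (hz : 2 ≤ z ∧ z ≤ N)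
    (heq : x * y = z)
    (hmono :
      (((x : ℝ) ≤ Real.sqrt (N / 2) ∨ (N : ℝ) / 2 < x) ∧
       ((y : ℝ) ≤ Real.sqrt (N / 2) ∨ (N : ℝ) / 2 < y) ∧
       ((z : ℝ) ≤ Real.sqrt (N / 2) ∨ (N : ℝ) / 2 < z)) ∨
      ((Real.sqrt (N / 2) < (x : ℝ) ∧ (x : ℝ) ≤ (N : ℝ) / 2) ∧
       (Real.sqrt (N / 2) < (y : ℝ) ∧ (y : ℝ) ≤ (N : ℝ) / 2) ∧
       (Real.sqrt (N / 2) < (z : ℝ) ∧ (z : ℝ) ≤ (N : ℝ) / 2))) :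
    (x : ℝ) ≤ Real.sqrt (N / 2) ∧ (y : ℝ) ≤ Real.sqrt (N / 2) ∧
    (z : ℝ) ≤ Real.sqrt (N / 2) :=
  stmt_12_general N x y z hx hy hz heq hmono
end

section
/- Let c be a 2-colouring of {2,...,N} and suppose c(2) = R. Let k > 2 be minimal with c(k) = B (assume such k exists and 4·a·k ≤ N for a given odd integer a ≥ 2 with k not dividing 4a and k ≠ 4). Then the set {2, k, 2k, a, 2a, ka, 2ka, 4a, 4ka} ⊆ {2,...,N} contains a monochromatic solution (x, y, z) to x·y = z with a dividing z. -/
/-!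
Write `p = 2` and `q = k`, so that `c p ≠ c q`, and suppose none of the nine products
`p·a, p·pa, p·qa, p·pqa, q·a, q·pa, q·ppa, pq·a, pq·pa` is monochromatic. Then the colour of `a`
propagates. If `c a = c p`, the colours of `pa, pqa, pq, ppqa` are forced in turn and `p·pqa`
becomes monochromatic; if `c a = c q`, those of `qa, pqa, pa, ppa, ppqa, pq` are forced and
`pq·pa` becomes monochromatic. Only commutativity is used, and `a` divides every product.
-/

variable {M κ : Type*}

theorem Bool.eq_of_ne_of_ne_s14 {a b x : Bool} (hab : a ≠ b) (hxb : x ≠ b) : x = a := by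
  revert a b x; decide

def IsMonochromaticMul [Mul M] (c : M → κ) (x y : M) : Prop :=
  c x = c y ∧ c y = c (x * y)

theorem exists_isMonochromaticMul [CommSemigroup M] (c : M → Bool) {p q : M} (hpq : c p ≠ c q)
    (a : M) :
    ∃ xy ∈ [(p, a), (p, p * a), (p, q * a), (p, p * (q * a)), (q, a), (q, p * a),
      (q, p * (p * a)), (p * q, a), (p * q, p * a)], IsMonochromaticMul c xy.1 xy.2 := by
  by_contra! hfree
  have avoid : ∀ x y, (x, y) ∈ _ → c x = c y → c (x * y) ≠ c y := fun x y hxy hc hc' =>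
    hfree (x, y) hxy ⟨hc, hc'.symm⟩
  have toP : ∀ {z}, c z ≠ c q → c z = c p := Bool.eq_of_ne_of_ne_s14 hpq
  have toQ : ∀ {z}, c z ≠ c p → c z = c q := Bool.eq_of_ne_of_ne_s14 hpq.symm
  have eq_qpa : q * (p * a) = p * (q * a) := mul_left_comm q p a
  have eq_pqa : p * q * a = p * (q * a) := mul_assoc p q a
  have eq_qppa : q * (p * (p * a)) = p * (p * (q * a)) := by rw [mul_left_comm, eq_qpa]
  have eq_pqpa : p * q * (p * a) = p * (p * (q * a)) := by rw [mul_assoc, eq_qpa]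
  by_cases ha : c a = c p
  · have hpa : c (p * a) = c q := toQ (ha ▸ avoid p a (by simp) ha.symm)
    have hpqa : c (p * (q * a)) = c p :=
      toP (eq_qpa ▸ hpa ▸ avoid q (p * a) (by simp) hpa.symm)
    have hcpq : c (p * q) = c q :=
      toQ fun h => avoid (p * q) a (by simp) (h.trans ha.symm) (by rw [eq_pqa, hpqa, ha])
    have hppqa : c (p * (p * (q * a))) = c p :=
      toP (eq_pqpa ▸ hpa ▸ avoid (p * q) (p * a) (by simp) (hcpq.trans hpa.symm))
    exact avoid p (p * (q * a)) (by simp) hpqa.symm (hppqa.trans hpqa.symm)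
  · have ha : c a = c q := toQ ha
    have hqa : c (q * a) = c p := toP (ha ▸ avoid q a (by simp) ha.symm)
    have hpqa : c (p * (q * a)) = c q := toQ (hqa ▸ avoid p (q * a) (by simp) hqa.symm)
    have hpa : c (p * a) = c p :=
      toP fun h => avoid q (p * a) (by simp) h.symm (by rw [eq_qpa, hpqa, h])
    have hppa : c (p * (p * a)) = c q := toQ (hpa ▸ avoid p (p * a) (by simp) hpa.symm)
    have hppqa : c (p * (p * (q * a))) = c p :=
      toP (eq_qppa ▸ hppa ▸ avoid q (p * (p * a)) (by simp) hppa.symm)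
    have hcpq : c (p * q) = c p :=
      toP fun h => avoid (p * q) a (by simp) (h.trans ha.symm) (by rw [eq_pqa, hpqa, ha])
    exact avoid (p * q) (p * a) (by simp) (hcpq.trans hpa.symm) (by rw [eq_pqpa, hppqa, hpa])

theorem stmt_14_general (k a : ℕ) (c : ℕ → Bool)
    (hc2 : c 2 = true) (hck : c k = false) :
    ∃ x ∈ ({2, k, 2*k, a, 2*a, k*a, 2*k*a, 4*a, 4*k*a} : Finset ℕ),
    ∃ y ∈ ({2, k, 2*k, a, 2*a, k*a, 2*k*a, 4*a, 4*k*a} : Finset ℕ),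
    ∃ z ∈ ({2, k, 2*k, a, 2*a, k*a, 2*k*a, 4*a, 4*k*a} : Finset ℕ),
      c x = c y ∧ c y = c z ∧ x * y = z ∧ a ∣ z := by
  obtain ⟨⟨x, y⟩, hxy, hcx, hcy⟩ :=
    exists_isMonochromaticMul c (p := 2) (q := k) (by rw [hc2, hck]; decide) a
  simp only [List.mem_cons, List.mem_nil_iff, or_false, Prod.mk.injEq] at hxy
  rcases hxy with ⟨hx, hy⟩ | ⟨hx, hy⟩ | ⟨hx, hy⟩ | ⟨hx, hy⟩ | ⟨hx, hy⟩ | ⟨hx, hy⟩ |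
    ⟨hx, hy⟩ | ⟨hx, hy⟩ | ⟨hx, hy⟩ <;> subst x y <;>
  refine ⟨_, ?_, _, ?_, _, ?_, hcx, hcy, rfl, ?_⟩ <;>
  dsimp only
  all_goals first
  | exact Dvd.dvd.mul_left (by simp [Dvd.dvd.mul_left]) _
  | (simp only [Finset.mem_insert, Finset.mem_singleton]; ring_nf; simp)

theorem stmt_14 (N k a : ℕ) (c : ℕ → Bool)
    (hc2 : c 2 = true) (hk2 : 2 < k) (hck : c k = false)
    (hmin : ∀ j, 2 ≤ j → j < k → c j = true)
    (ha : 2 ≤ a) (haodd : Odd a) (hN : 4 * a * k ≤ N)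
    (hknd : ¬ k ∣ 4 * a) (hk4 : k ≠ 4) :
    ∃ x ∈ ({2, k, 2*k, a, 2*a, k*a, 2*k*a, 4*a, 4*k*a} : Finset ℕ),
    ∃ y ∈ ({2, k, 2*k, a, 2*a, k*a, 2*k*a, 4*a, 4*k*a} : Finset ℕ),
    ∃ z ∈ ({2, k, 2*k, a, 2*a, k*a, 2*k*a, 4*a, 4*k*a} : Finset ℕ),
      c x = c y ∧ c y = c z ∧ x * y = z ∧ a ∣ z :=
  stmt_14_general k a c hc2 hck
end

section
/- Any 2-colouring of {2,...,N} contains at least (1/2 − o(1))·N^{1/5} monochromatic solutions to x·y = z; more precisely, for every non-perfect-power integer a with 2 ≤ a ≤ N^{1/5}, the set {a, a², a³, a⁴, a⁵} yields a monochromatic solution with z = aᵐ for some 2 ≤ m ≤ 5, and distinct such a yield distinct solutions (since a is recoverable from z as the least element b with z a power of b). -/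
/-!
By Schur's theorem `S(2) = 5`, every 2-colouring of `{1, …, 5}` has a monochromatic solution of
`i + j = k`, so every 2-colouring of `{a, a², …, a⁵}` has a monochromatic product
`aⁱ · aʲ = aⁱ⁺ʲ`. For distinct non-perfect powers `a` these products are distinct, since
`aᵐ = bⁿ` forces `a = b`. Taking `a` up to `⌊N^{1/5}⌋ =: K` keeps everything in `{2, …, N}`, and
only `O(√K log K)` numbers up to `K` are perfect powers, so at least `(K + 1) / 2` of them
remain once `K ≥ 2¹⁶`; as `N^{1/5} < K + 1`, the error term can be taken to vanish for `N ≥ 2⁸⁰`.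
-/

open Finset

def IsPerfectPower (a : ℕ) : Prop := ∃ b t, 2 ≤ b ∧ 2 ≤ t ∧ b ^ t = a

def monochromaticProducts (N : ℕ) (c : ℕ → Bool) : Finset (ℕ × ℕ × ℕ) :=
  (Icc 2 N ×ˢ Icc 2 N ×ˢ Icc 2 N).filter
    (fun p => p.1 * p.2.1 = p.2.2 ∧ c p.1 = c p.2.1 ∧ c p.2.1 = c p.2.2)

theorem eq_of_pow_eq_pow_of_not_isPerfectPower {a b i j : ℕ} (ha : 2 ≤ a)
    (hA : ¬IsPerfectPower a) (hB : ¬IsPerfectPower b) (hi : i ≠ 0) (hj : j ≠ 0)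
    (h : a ^ i = b ^ j) : a = b := by
  obtain ⟨d, rfl, rfl⟩ := Nat.exists_eq_pow_of_pow_eq_pow (.inl hi) h
  have hg : 0 < i.gcd j := Nat.gcd_pos_of_pos_left j (Nat.pos_of_ne_zero hi)
  have hjg : 0 < j / i.gcd j := Nat.div_pos (Nat.le_of_dvd (by omega) (Nat.gcd_dvd_right i j)) hg
  have hig : 0 < i / i.gcd j := Nat.div_pos (Nat.le_of_dvd (by omega) (Nat.gcd_dvd_left i j)) hg
  have hd : 2 ≤ d := by
    by_contra! hd
    interval_cases d <;> simp_all
  have hj1 : j / i.gcd j = 1 := by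
    by_contra hne
    exact hA ⟨d, _, hd, by omega, rfl⟩
  have hi1 : i / i.gcd j = 1 := by
    by_contra hne
    exact hB ⟨d, _, hd, by omega, rfl⟩
  rw [hj1, hi1]

/-- Schur's theorem `S(2) = 5`. -/
theorem exists_monochromatic_add_le_five (c : ℕ → Bool) :
    ∃ i j, 0 < i ∧ 0 < j ∧ i + j ≤ 5 ∧ c i = c j ∧ c j = c (i + j) := by
  have key : ∀ x₁ x₂ x₃ x₄ x₅ : Bool, (x₁ = x₁ ∧ x₁ = x₂) ∨ (x₂ = x₂ ∧ x₂ = x₄) ∨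
      (x₁ = x₃ ∧ x₃ = x₄) ∨ (x₂ = x₃ ∧ x₃ = x₅) ∨ (x₁ = x₄ ∧ x₄ = x₅) := by
    decide
  rcases key (c 1) (c 2) (c 3) (c 4) (c 5) with h | h | h | h | h
  exacts [⟨1, 1, by decide, by decide, by decide, h⟩, ⟨2, 2, by decide, by decide, by decide, h⟩,
    ⟨1, 3, by decide, by decide, by decide, h⟩, ⟨2, 3, by decide, by decide, by decide, h⟩,
    ⟨1, 4, by decide, by decide, by decide, h⟩]

theorem sixteen_mul_sq_le_two_pow {l : ℕ} (hl : 16 ≤ l) : 16 * l ^ 2 ≤ 2 ^ l := by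
  induction l, hl using Nat.le_induction with
  | base => norm_num
  | succ n hn ih =>
    calc 16 * (n + 1) ^ 2 ≤ 2 * (16 * n ^ 2) := by nlinarith
      _ ≤ 2 * 2 ^ n := by omega
      _ = 2 ^ (n + 1) := (pow_succ' 2 n).symm

theorem Nat.rpow_one_div_lt_nthRoot_add_one {n : ℕ} (hn : n ≠ 0) (a : ℕ) :
    (a : ℝ) ^ ((1 : ℝ) / n) < Nat.nthRoot n a + 1 := by
  rw [one_div, Real.rpow_inv_lt_iff_of_pos (by positivity) (by positivity) (by positivity),
    Real.rpow_natCast]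
  exact_mod_cast Nat.lt_pow_nthRoot_add_one hn a

section Counting

open Classical

theorem card_not_isPerfectPower_le_card_monochromaticProducts {K N : ℕ} (hK : K ^ 5 ≤ N)
    (c : ℕ → Bool) :
    #{a ∈ Icc 2 K | ¬IsPerfectPower a} ≤ #(monochromaticProducts N c) := by
  choose i j hi hj hij hc₁ hc₂ using fun a => exists_monochromatic_add_le_five (c <| a ^ ·)
  have hpow_mem {a k : ℕ} (ha : a ∈ Icc 2 K) (hk : 0 < k) (hk5 : k ≤ 5) : a ^ k ∈ Icc 2 N := by
    rw [mem_Icc] at ha ⊢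
    exact ⟨ha.1.trans (Nat.le_self_pow hk.ne' a),
      (Nat.pow_le_pow_right (by omega) hk5).trans ((Nat.pow_le_pow_left ha.2 5).trans hK)⟩
  refine card_le_card_of_injOn (fun a => (a ^ i a, a ^ j a, a ^ (i a + j a))) ?_ ?_
  · intro a ha
    rw [mem_coe, mem_filter] at ha
    rw [mem_coe, monochromaticProducts, mem_filter, mem_product, mem_product]
    exact ⟨⟨hpow_mem ha.1 (hi a) (by grind), hpow_mem ha.1 (hj a) (by grind),
      hpow_mem ha.1 (by grind) (hij a)⟩, (pow_add a _ _).symm, hc₁ a, hc₂ a⟩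
  · intro a ha b hb hab
    simp only [coe_filter, mem_Icc, Set.mem_ofPred_eq] at ha hb
    exact eq_of_pow_eq_pow_of_not_isPerfectPower ha.1.1 ha.2 hb.2 (by grind) (by grind)
      (congrArg (·.2.2) hab)

/-- A perfect power `bᵗ ≤ K` has `b ≤ √K` and `t ≤ log₂ K`. -/
theorem card_isPerfectPower_le (K : ℕ) :
    #{a ∈ Icc 2 K | IsPerfectPower a} ≤ Nat.sqrt K * Nat.log 2 K := by
  have hsub : {a ∈ Icc 2 K | IsPerfectPower a} ⊆
      (Icc 2 (Nat.sqrt K) ×ˢ Icc 2 (Nat.log 2 K)).image fun p => p.1 ^ p.2 := by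
    intro x hx
    simp only [mem_filter, mem_Icc] at hx
    obtain ⟨⟨-, hxK⟩, b, t, hb, ht, rfl⟩ := hx
    refine mem_image.2 ⟨(b, t), ?_, rfl⟩
    simp only [mem_product, mem_Icc]
    refine ⟨⟨hb, Nat.le_sqrt.2 ?_⟩, ht, Nat.le_log_of_pow_le (by norm_num) ?_⟩
    · calc b * b = b ^ 2 := (sq b).symm
        _ ≤ b ^ t := Nat.pow_le_pow_right (by omega) ht
        _ ≤ K := hxK
    · exact (Nat.pow_le_pow_left hb t).trans hxK
  calc #{a ∈ Icc 2 K | IsPerfectPower a}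
      ≤ #(Icc 2 (Nat.sqrt K) ×ˢ Icc 2 (Nat.log 2 K)) := (card_le_card hsub).trans card_image_le
    _ ≤ Nat.sqrt K * Nat.log 2 K := by
      rw [card_product, Nat.card_Icc, Nat.card_Icc]
      exact Nat.mul_le_mul (by omega) (by omega)

theorem add_one_le_two_mul_card_not_isPerfectPower {K : ℕ} (hK : 2 ^ 16 ≤ K) :
    K + 1 ≤ 2 * #{a ∈ Icc 2 K | ¬IsPerfectPower a} := by
  set s := Nat.sqrt K
  set l := Nat.log 2 K
  have hl : 16 ≤ l := Nat.le_log_of_pow_le (by norm_num) hK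
  have hls : 4 * l ≤ s := by
    refine Nat.le_sqrt.2 ?_
    calc 4 * l * (4 * l) = 16 * l ^ 2 := by ring
      _ ≤ 2 ^ l := sixteen_mul_sq_le_two_pow hl
      _ ≤ K := Nat.pow_log_le_self 2 (by omega)
  have hss : s * s ≤ K := Nat.sqrt_le K
  have hsl : 4 * (s * l) ≤ s * s := by nlinarith
  have hsplit : #{a ∈ Icc 2 K | IsPerfectPower a} + #{a ∈ Icc 2 K | ¬IsPerfectPower a} = K - 1 := by
    rw [card_filter_add_card_filter_not, Nat.card_Icc]
    rfl
  have hpp : #{a ∈ Icc 2 K | IsPerfectPower a} ≤ s * l := card_isPerfectPower_le K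
  omega

end Counting

theorem stmt_16 :
    ∃ f : ℕ → ℝ, Filter.Tendsto f Filter.atTop (nhds 0) ∧
      ∀ (N : ℕ) (c : ℕ → Bool),
        ((1 : ℝ) / 2 - f N) * (N : ℝ) ^ ((1 : ℝ) / 5) ≤
        (((Finset.Icc 2 N ×ˢ Finset.Icc 2 N ×ˢ Finset.Icc 2 N).filter
          (fun p => p.1 * p.2.1 = p.2.2 ∧ c p.1 = c p.2.1 ∧ c p.2.1 = c p.2.2)).card : ℝ) := by
  refine ⟨fun N => if 2 ^ 80 ≤ N then 0 else 1 / 2,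
    tendsto_const_nhds.congr' (Filter.eventually_atTop.2 ⟨2 ^ 80, fun N hN => (if_pos hN).symm⟩),
    fun N c => ?_⟩
  dsimp only
  split_ifs with hN
  · have hK : 2 ^ 16 ≤ Nat.nthRoot 5 N :=
      (Nat.le_nthRoot_iff (by norm_num)).2 (by simpa [← pow_mul] using hN)
    have hcount := card_not_isPerfectPower_le_card_monochromaticProducts
      (Nat.pow_nthRoot_le (a := N) (.inl (by norm_num))) c
    have hroot := Nat.rpow_one_div_lt_nthRoot_add_one (by norm_num : 5 ≠ 0) N
    have hsol : (Nat.nthRoot 5 N : ℝ) + 1 ≤ 2 * #(monochromaticProducts N c) := by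
      exact_mod_cast (add_one_le_two_mul_card_not_isPerfectPower hK).trans
        (Nat.mul_le_mul_left 2 hcount)
    push_cast at hroot
    unfold monochromaticProducts at hsol
    linarith
  · simp
end

section
/- For every r ≥ 1, if there exists an r-colouring of the integer interval {1,...,S} with no monochromatic solution to x + y = z and no monochromatic solution to x + y + 1 = z, then there exists an r-colouring of the real interval [1, S+1) with no monochromatic solution to x + y = z. (Namely, colour each real x by the colour of ⌊x⌋.) -/
/-! Colour a real `x` by the colour of `⌊x⌋`. If `x + y = z` then `⌊z⌋` is `⌊x⌋ + ⌊y⌋` or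
`⌊x⌋ + ⌊y⌋ + 1`, so a monochromatic real solution of `x + y = z` yields a monochromatic integer
solution of `a + b = c` or of `a + b + 1 = c`, and `[1, S + 1)` floors into `{1, …, S}`. -/

namespace Nat

variable {R : Type*} [Semiring R] [LinearOrder R] [IsStrictOrderedRing R] [FloorSemiring R]
  {a b : R}

theorem floor_add_floor_le_floor_add (ha : 0 ≤ a) (hb : 0 ≤ b) : ⌊a⌋₊ + ⌊b⌋₊ ≤ ⌊a + b⌋₊ :=
  le_floor <| by push_cast; exact _root_.add_le_add (floor_le ha) (floor_le hb)

theorem floor_add_lt_floor_add_floor_add_two (ha : 0 ≤ a) (hb : 0 ≤ b) :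
    ⌊a + b⌋₊ < ⌊a⌋₊ + ⌊b⌋₊ + 2 := by
  refine (floor_lt (add_nonneg ha hb)).2 ?_
  calc a + b < (⌊a⌋₊ + 1) + (⌊b⌋₊ + 1) := _root_.add_lt_add (lt_floor_add_one a) (lt_floor_add_one b)
    _ = ((⌊a⌋₊ + ⌊b⌋₊ + 2 : ℕ) : R) := by push_cast; rw [add_add_add_comm, one_add_one_eq_two]

theorem floor_add_eq_or (ha : 0 ≤ a) (hb : 0 ≤ b) :
    ⌊a + b⌋₊ = ⌊a⌋₊ + ⌊b⌋₊ ∨ ⌊a + b⌋₊ = ⌊a⌋₊ + ⌊b⌋₊ + 1 := by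
  have := floor_add_floor_le_floor_add ha hb
  have := floor_add_lt_floor_add_floor_add_two ha hb
  omega

theorem floor_mem_Icc_of_mem_Ico {x : R} {S : ℕ} (hx : x ∈ Set.Ico (1 : R) (S + 1)) :
    ⌊x⌋₊ ∈ Finset.Icc 1 S := by
  have hlt : ⌊x⌋₊ < S + 1 :=
    (floor_lt (zero_le_one.trans hx.1)).2 (by exact_mod_cast hx.2)
  exact Finset.mem_Icc.2 ⟨(one_le_floor_iff x).2 hx.1, Nat.lt_add_one_iff.1 hlt⟩

end Nat

theorem stmt_19_general (r : ℕ) (S : ℕ) (ξ : ℕ → Fin r)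
    (h : ∀ x ∈ Finset.Icc 1 S, ∀ y ∈ Finset.Icc 1 S, ∀ z ∈ Finset.Icc 1 S,
      ξ x = ξ y → ξ y = ξ z → x + y ≠ z ∧ x + y + 1 ≠ z) :
    ∃ c : ℝ → Fin r,
      ∀ x ∈ Set.Ico (1 : ℝ) (S + 1), ∀ y ∈ Set.Ico (1 : ℝ) (S + 1),
      ∀ z ∈ Set.Ico (1 : ℝ) (S + 1),
        c x = c y → c y = c z → x + y ≠ z := by
  refine ⟨fun x => ξ ⌊x⌋₊, fun x hx y hy z hz hxy hyz hsum => ?_⟩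
  obtain ⟨hne, hne_succ⟩ := h _ (Nat.floor_mem_Icc_of_mem_Ico hx) _
    (Nat.floor_mem_Icc_of_mem_Ico hy) _ (Nat.floor_mem_Icc_of_mem_Ico hz) hxy hyz
  subst hsum
  rcases Nat.floor_add_eq_or (zero_le_one.trans hx.1) (zero_le_one.trans hy.1) with heq | heq
  · exact hne heq.symm
  · exact hne_succ heq.symm

theorem stmt_19 (r : ℕ) (hr : 1 ≤ r) (S : ℕ) (ξ : ℕ → Fin r)
    (h : ∀ x ∈ Finset.Icc 1 S, ∀ y ∈ Finset.Icc 1 S, ∀ z ∈ Finset.Icc 1 S,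
      ξ x = ξ y → ξ y = ξ z → x + y ≠ z ∧ x + y + 1 ≠ z) :
    ∃ c : ℝ → Fin r,
      ∀ x ∈ Set.Ico (1 : ℝ) (S + 1), ∀ y ∈ Set.Ico (1 : ℝ) (S + 1),
      ∀ z ∈ Set.Ico (1 : ℝ) (S + 1),
        c x = c y → c y = c z → x + y ≠ z :=
  stmt_19_general r S ξ h
end
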